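/- arXiv:0804.0112 — 3 statements merged into one kernel-verified Lean document; each statement's English description precedes it below -/
import Mathlib

section
/- For every odd negative integer n, (w+1) divides q_n' in 𝔽₂[w] if and only if (w+1) divides q_{n+6}' in 𝔽₂[w], where ' denotes formal derivative (interpreting q_n for n ∈ {-1,-3,-5} by the base cases); consequently (w+1) divides q_n' mod 2 if and only if 3 | n. -/
/-! Modulo 2 we have `w ^ 2 - 1 = (w + 1) ^ 2`, so the recurrence reads
`q_n ≡ (w + 1) ^ 2 * (q_{n+2} - q_{n+4}) + q_{n+6}`. The first summand has a double root at `1`,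
hence its derivative vanishes there, and `q_n'(1) ≡ q_{n+6}'(1)`. Since `w + 1 = w - 1` divides a
polynomial over `𝔽₂` iff the polynomial vanishes at `1`, divisibility is `6`-periodic in `n`,
and the three base cases give `3 ∣ n`. -/

open Polynomial

/-- `qAux k` is the polynomial `q_{-(2k+1)}` of the paper. -/
noncomputable def qAux : ℕ → Polynomial ℤ
  | 0 => X ^ 3 - X ^ 2 + 2 * X - 7
  | 1 => X ^ 5 - 2 * X ^ 4 - 2 * X ^ 3 + 5 * X ^ 2 + 3 * X - 9
  | 2 => X ^ 7 - 2 * X ^ 6 - 4 * X ^ 5 + 8 * X ^ 4 + 4 * X ^ 3 - 7 * X ^ 2 + 2 * X - 7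
  | (k + 3) => (X ^ 2 - 1) * (qAux (k + 2) - qAux (k + 1)) + qAux k

/-- `qq n` is the polynomial `q_n` of the paper, for `n` odd and negative. -/
noncomputable def qq (n : ℤ) : Polynomial ℤ := qAux ((-1 - n) / 2).toNat

theorem X_add_one_dvd_iff_eval_one_eq_zero {R : Type*} [CommRing R] [CharP R 2] (p : R[X]) :
    X + 1 ∣ p ↔ p.eval 1 = 0 := by
  rw [← CharTwo.neg_eq (1 : R[X]), ← sub_eq_add_neg, ← C_1, dvd_iff_isRoot, IsRoot.def]

theorem eval_derivative_X_sub_C_sq_mul {R : Type*} [CommRing R] (a : R) (r : R[X]) :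
    (derivative ((X - C a) ^ 2 * r)).eval a = 0 := by
  simp [derivative_X_sub_C_sq]

local notation "q₂" k:max => Polynomial.map (Int.castRingHom (ZMod 2)) (qAux k)

theorem map_qAux_add_three (k : ℕ) :
    q₂ (k + 3) = (X - C 1) ^ 2 * (q₂ (k + 2) - q₂ (k + 1)) + q₂ k := by
  have hsq : (X ^ 2 - 1 : (ZMod 2)[X]) = (X - C 1) ^ 2 := by
    rw [C_1, CharTwo.sub_eq_add, CharTwo.sub_eq_add, CharTwo.add_sq, one_pow]
  rw [qAux, Polynomial.map_add, Polynomial.map_mul, Polynomial.map_sub, Polynomial.map_sub,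
    Polynomial.map_pow, Polynomial.map_X, Polynomial.map_one, hsq]

theorem eval_one_derivative_map_qAux_add_three (k : ℕ) :
    (derivative (q₂ (k + 3))).eval 1 = (derivative (q₂ k)).eval 1 := by
  rw [map_qAux_add_three, derivative_add, eval_add, eval_derivative_X_sub_C_sq_mul, zero_add]

theorem eval_one_derivative_map_qAux_eq_zero_iff : ∀ k : ℕ,
    (derivative (q₂ k)).eval 1 = 0 ↔ k % 3 = 1
  | 0 => by simp [qAux]; decide
  | 1 => by simp [qAux]; decide
  | 2 => by simp [qAux]; decide
  | k + 3 => by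
      rw [eval_one_derivative_map_qAux_add_three, eval_one_derivative_map_qAux_eq_zero_iff k]
      omega

theorem qq_neg_two_mul_add_one (k : ℕ) : qq (-(2 * k + 1)) = qAux k := by
  rw [qq, show (-1 - -(2 * (k : ℤ) + 1)) / 2 = k by omega, Int.toNat_natCast]

/-- For every odd negative integer `n`: if `n ≤ -7` then `(w+1)` divides
`q_n'` in `𝔽₂[w]` iff `(w+1)` divides `q_{n+6}'` in `𝔽₂[w]`; consequently
`(w+1)` divides `q_n'` mod `2` iff `3 ∣ n`. -/
theorem q_deriv_w_add_one_dvd (n : ℤ) (hodd : Odd n) (hneg : n < 0) :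
    (n ≤ -7 →
      (((X + 1 : Polynomial (ZMod 2)) ∣
          derivative ((qq n).map (Int.castRingHom (ZMod 2)))) ↔
        ((X + 1 : Polynomial (ZMod 2)) ∣
          derivative ((qq (n + 6)).map (Int.castRingHom (ZMod 2)))))) ∧
    (((X + 1 : Polynomial (ZMod 2)) ∣
        derivative ((qq n).map (Int.castRingHom (ZMod 2)))) ↔ 3 ∣ n) := by
  obtain ⟨k, rfl⟩ : ∃ k : ℕ, n = -(2 * k + 1) := by
    obtain ⟨m, rfl⟩ := hodd
    exact ⟨(-1 - m).toNat, by omega⟩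
  simp only [qq_neg_two_mul_add_one, X_add_one_dvd_iff_eval_one_eq_zero,
    eval_one_derivative_map_qAux_eq_zero_iff]
  refine ⟨fun hk => ?_, by omega⟩
  obtain ⟨j, rfl⟩ : ∃ j : ℕ, k = j + 3 := ⟨k - 3, by omega⟩
  rw [show -(2 * ((j + 3 : ℕ) : ℤ) + 1) + 6 = -(2 * j + 1) by push_cast; ring,
    qq_neg_two_mul_add_one, eval_one_derivative_map_qAux_eq_zero_iff]
  omega
end

section
/- For every odd negative integer n, the coefficient of w^2 in q_n, reduced modulo 3, is never 0; in fact these coefficients mod 3 cycle with period 12 through the values 2,2,2,1,1,1 (for n = -1,-3,-5,-7,-9,-11 respectively, and then repeating). -/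
open Polynomial

/-!
Multiplication by `w^2 - 1` sends the coefficients `(c₀, c₂)` of `p` to `(-c₀, c₀ - c₂)`, so the
pair formed by the coefficients of `w^0` and `w^2` of `q_{-(2k+1)}` obeys a third-order recurrence
of its own. Modulo `3` its states live in a finite set, and the initial window of three
consecutive pairs recurs after six steps; reading off the six values of the `w^2`-coefficient
gives the cycle `2, 2, 2, 1, 1, 1` in `k`, i.e. period `12` in `n = -(2k+1)`.
-/

section CoeffLow

variable {R : Type*} [Ring R]

lemma coeff_zero_X_sq_sub_one_mul (p : R[X]) : ((X ^ 2 - 1) * p).coeff 0 = -p.coeff 0 := by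
  simp [sub_mul, mul_coeff_zero]

lemma coeff_two_X_sq_sub_one_mul (p : R[X]) :
    ((X ^ 2 - 1) * p).coeff 2 = p.coeff 0 - p.coeff 2 := by
  rw [sub_mul, one_mul, coeff_sub, show (2 : ℕ) = 0 + 2 from rfl, coeff_X_pow_mul]

end CoeffLow

noncomputable def lowCoeffs (k : ℕ) : ZMod 3 × ZMod 3 :=
  ((qAux k).coeff 0, (qAux k).coeff 2)

def lowCoeffsNext (x y z : ZMod 3 × ZMod 3) : ZMod 3 × ZMod 3 :=
  (x.1 - (z.1 - y.1), x.2 + (z.1 - y.1) - (z.2 - y.2))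

lemma lowCoeffs_add_three (k : ℕ) :
    lowCoeffs (k + 3) = lowCoeffsNext (lowCoeffs k) (lowCoeffs (k + 1)) (lowCoeffs (k + 2)) := by
  simp only [lowCoeffs, lowCoeffsNext, qAux, coeff_add, coeff_zero_X_sq_sub_one_mul,
    coeff_two_X_sq_sub_one_mul, coeff_sub]
  ext <;> push_cast <;> ring

abbrev Window := (ZMod 3 × ZMod 3) × (ZMod 3 × ZMod 3) × (ZMod 3 × ZMod 3)

def Window.step (t : Window) : Window :=
  (t.2.1, t.2.2, lowCoeffsNext t.1 t.2.1 t.2.2)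

noncomputable def window (k : ℕ) : Window :=
  (lowCoeffs k, lowCoeffs (k + 1), lowCoeffs (k + 2))

lemma window_eq_iterate (k : ℕ) : window k = Window.step^[k] (window 0) := by
  induction k with
  | zero => rfl
  | succ k ih =>
    rw [Function.iterate_succ_apply', ← ih, window, window, Window.step, lowCoeffs_add_three]

lemma window_zero : window 0 = ((2, 2), (0, 2), (2, 2)) := by
  simp only [window, lowCoeffs, qAux, coeff_sub, coeff_add, coeff_X_pow, coeff_ofNat_mul,
    coeff_X, coeff_ofNat_zero, coeff_ofNat_succ]
  decide

lemma window_zero_isPeriodicPt : Function.IsPeriodicPt Window.step 6 (window 0) := by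
  rw [window_zero]
  decide

lemma coeff_two_qAux_mod_three (k : ℕ) :
    ((qAux k).coeff 2 : ZMod 3) = if k % 6 < 3 then 2 else 1 := by
  have h : ((qAux k).coeff 2 : ZMod 3) = (Window.step^[k % 6] (window 0)).1.2 := by
    rw [window_zero_isPeriodicPt.iterate_mod_apply, ← window_eq_iterate]
    rfl
  rw [h, window_zero]
  have hk : k % 6 < 6 := Nat.mod_lt _ (by norm_num)
  interval_cases k % 6 <;> decide

/-- For every odd negative integer `n`, the coefficient of `w^2` in `q_n` is
nonzero mod `3`; in fact these coefficients mod `3` cycle with period `12`: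
the value is `2` for `n ≡ -1, -3, -5 (mod 12)` and `1` for
`n ≡ -7, -9, -11 (mod 12)`. -/
theorem q_coeff_two_mod_three (n : ℤ) (hodd : Odd n) (hneg : n < 0) :
    (((qq n).coeff 2 : ZMod 3) ≠ 0) ∧
    ((n % 12 = 11 ∨ n % 12 = 9 ∨ n % 12 = 7) → ((qq n).coeff 2 : ZMod 3) = 2) ∧
    ((n % 12 = 5 ∨ n % 12 = 3 ∨ n % 12 = 1) → ((qq n).coeff 2 : ZMod 3) = 1) := by
  obtain ⟨m, hm⟩ := hodd
  set k : ℕ := ((-1 - n) / 2).toNat with hk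
  have hn : n = -(2 * (k : ℤ) + 1) := by omega
  have hq : ((qq n).coeff 2 : ZMod 3) = if k % 6 < 3 then 2 else 1 := coeff_two_qAux_mod_three k
  rw [hq]
  split_ifs with hlt
  · exact ⟨by decide, fun _ => rfl, fun h => by omega⟩
  · exact ⟨by decide, fun h => by omega, fun _ => rfl⟩
end

section
/- For every odd negative integer n divisible by 3 with n ≡ 1 (mod 4), q_n has no monic quadratic factor in ℤ[w] that reduces to w^2 modulo 3. -/
/-!
Modulo `M = w (w - 1) (w + 1) (w - 2) (w² - 3)` the sequence `q_{-1}, q_{-3}, q_{-5}, …` is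
6-periodic, and the conditions on `n` say `n ≡ -3 (mod 12)`, so `q_n ≡ q_{-3} (mod M)`.
A monic factor `w² + a w + b` with `3 ∣ b` then has `f(c) ∣ q_{-3}(c)` at the roots
`c = 0, 1, -1, 2` of `M`, i.e. `f(c)` divides `-9, -4, -8, 1`; this forces `f = w² - 3`.
But `w² - 3` divides `M`, so it would divide `q_{-3}`, whose value at `√3` is `6√3 - 12 ≠ 0`.
-/

open Polynomial

theorem Polynomial.Monic.eq_X_sq_add_of_natDegree_eq_two {R : Type*} [Semiring R] {f : R[X]}
    (hf : f.Monic) (h : f.natDegree = 2) : f = X ^ 2 + C (f.coeff 1) * X + C (f.coeff 0) := by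
  conv_lhs => rw [hf.as_sum, h]
  simp only [Finset.sum_range_succ, Finset.sum_range_zero, pow_zero, pow_one, mul_one, zero_add]
  abel

theorem Polynomial.intCast_dvd_coeff_of_map_eq_X_pow {p d i : ℕ} {f : ℤ[X]}
    (h : f.map (Int.castRingHom (ZMod p)) = X ^ d) (hi : i ≠ d) : (p : ℤ) ∣ f.coeff i := by
  have := congrArg (coeff · i) h
  simp only [coeff_map, coeff_X_pow, hi, if_false] at this
  exact (ZMod.intCast_zmod_eq_zero_iff_dvd _ _).mp this

theorem Polynomial.eval_eq_of_dvd_sub {R : Type*} [CommRing R] {M p q : R[X]} {c : R}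
    (h : M ∣ p - q) (hc : M.IsRoot c) : p.eval c = q.eval c := by
  obtain ⟨u, hu⟩ := h
  rw [← sub_eq_zero, ← eval_sub, hu, eval_mul, hc.eq_zero, zero_mul]

noncomputable def qModulus : ℤ[X] := X * (X - 1) * (X + 1) * (X - 2) * (X ^ 2 - 3)

theorem qAux_add_three (k : ℕ) :
    qAux (k + 3) = (X ^ 2 - 1) * (qAux (k + 2) - qAux (k + 1)) + qAux k := by
  rw [qAux]

theorem qModulus_dvd_qAux_add_six_sub : ∀ k : ℕ, qModulus ∣ qAux (k + 6) - qAux k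
  | 0 => ⟨5 * X - 20 * X ^ 3 + 21 * X ^ 5 - 8 * X ^ 7 + X ^ 9, by
      simp only [qAux, qModulus]; ring⟩
  | 1 => ⟨-6 * X + 35 * X ^ 3 - 56 * X ^ 5 + 36 * X ^ 7 - 10 * X ^ 9 + X ^ 11, by
      simp only [qAux, qModulus]; ring⟩
  | 2 => ⟨7 * X - 56 * X ^ 3 + 126 * X ^ 5 - 120 * X ^ 7 + 55 * X ^ 9 - 12 * X ^ 11 + X ^ 13, by
      simp only [qAux, qModulus]; ring⟩
  | k + 3 => by
      have h := dvd_add ((dvd_sub (qModulus_dvd_qAux_add_six_sub (k + 2))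
        (qModulus_dvd_qAux_add_six_sub (k + 1))).mul_left (X ^ 2 - 1))
        (qModulus_dvd_qAux_add_six_sub k)
      rw [show k + 3 + 6 = k + 6 + 3 from rfl, qAux_add_three (k + 6), qAux_add_three k]
      convert h using 1
      ring

theorem qModulus_dvd_qAux_six_mul_add_sub (m r : ℕ) : qModulus ∣ qAux (6 * m + r) - qAux r := by
  induction m with
  | zero => simp
  | succ m ih =>
    rw [← sub_add_sub_cancel _ (qAux (6 * m + r)),
      show 6 * (m + 1) + r = 6 * m + r + 6 by ring]
    exact dvd_add (qModulus_dvd_qAux_add_six_sub _) ih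

theorem qq_eq_qAux_six_mul_add_one {n : ℤ} (hneg : n < 0) (h3 : 3 ∣ n) (h4 : n % 4 = 1) :
    ∃ m : ℕ, qq n = qAux (6 * m + 1) :=
  ⟨((-1 - n) / 2).toNat / 6, by rw [qq]; congr 1; omega⟩

theorem X_sq_sub_three_dvd_qModulus : (X ^ 2 - 3 : ℤ[X]) ∣ qModulus :=
  dvd_mul_left _ _

theorem eq_zero_and_eq_neg_three_of_dvd_eval_qAux_one {a b : ℤ} (hb : 3 ∣ b)
    (h : ∀ c : ℤ, qModulus.IsRoot c → c ^ 2 + a * c + b ∣ (qAux 1).eval c) :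
    a = 0 ∧ b = -3 := by
  have h0 : b ∣ 9 := by simpa [qModulus, qAux] using h 0
  have h1 : 1 + a + b ∣ -4 := by simpa [qModulus, qAux] using h 1
  have hm1 : 1 + -a + b ∣ 8 := by simpa [qModulus, qAux] using h (-1)
  have h2 : 4 + a * 2 + b ∣ 1 := by simpa [qModulus, qAux] using h 2
  have hb_le : b ≤ 9 := Int.le_of_dvd (by norm_num) h0
  have hb_ge : -9 ≤ b := neg_le.mp (Int.le_of_dvd (by norm_num) (neg_dvd.mpr h0))
  have h2' := Int.isUnit_iff.mp (isUnit_of_dvd_one h2)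
  have ha_le : a ≤ 7 := by omega
  have ha_ge : -7 ≤ a := by omega
  interval_cases b <;> try omega
  all_goals interval_cases a <;> revert h1 hm1 h2 <;> decide

theorem aeval_sqrt_three_qAux_one : aeval √3 (qAux 1) = 6 * √3 - 12 := by
  have h : √3 ^ 2 = 3 := Real.sq_sqrt (by norm_num)
  simp only [qAux, map_sub, map_add, map_mul, map_pow, aeval_X, map_ofNat]
  linear_combination (√3 ^ 3 - 2 * √3 ^ 2 + √3 - 1) * h

theorem X_sq_sub_three_not_dvd_qAux_one : ¬ (X ^ 2 - 3 : ℤ[X]) ∣ qAux 1 := by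
  intro h
  have h3 : √3 ^ 2 = 3 := Real.sq_sqrt (by norm_num)
  have h' := map_dvd (aeval √3) h
  rw [aeval_sqrt_three_qAux_one, map_sub, map_pow, aeval_X, map_ofNat, h3, sub_self,
    zero_dvd_iff, sub_eq_zero] at h'
  nlinarith

theorem q_no_quadratic_factor_w_sq_mod_three_general (n : ℤ)
    (hneg : n < 0) (h3 : 3 ∣ n) (h4 : n % 4 = 1) :
    ¬ ∃ f : Polynomial ℤ, f.Monic ∧ f.natDegree = 2 ∧ f ∣ qq n ∧
      f.map (Int.castRingHom (ZMod 3)) = X ^ 2 := by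
  rintro ⟨f, hmon, hdeg, hdvd, hmap⟩
  obtain ⟨m, hq⟩ := qq_eq_qAux_six_mul_add_one hneg h3 h4
  have hcong : qModulus ∣ qq n - qAux 1 := hq ▸ qModulus_dvd_qAux_six_mul_add_sub m 1
  have hf := hmon.eq_X_sq_add_of_natDegree_eq_two hdeg
  obtain ⟨ha, hb⟩ : f.coeff 1 = 0 ∧ f.coeff 0 = -3 := by
    refine eq_zero_and_eq_neg_three_of_dvd_eval_qAux_one
      (intCast_dvd_coeff_of_map_eq_X_pow hmap (by norm_num)) fun c hc => ?_
    have hc' := eval_dvd (x := c) hdvd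
    rw [eval_eq_of_dvd_sub hcong hc, hf] at hc'
    simpa using hc'
  have hf3 : f = X ^ 2 - 3 := by rw [hf, ha, hb]; simp [sub_eq_add_neg]
  exact X_sq_sub_three_not_dvd_qAux_one
    ((dvd_sub_right (hf3 ▸ hdvd)).mp (X_sq_sub_three_dvd_qModulus.trans hcong))

/-- For every odd negative integer `n` divisible by `3` with `n ≡ 1 (mod 4)`,
`q_n` has no monic quadratic factor in `ℤ[w]` reducing to `w^2` mod `3`. -/
theorem q_no_quadratic_factor_w_sq_mod_three (n : ℤ) (hodd : Odd n)
    (hneg : n < 0) (h3 : 3 ∣ n) (h4 : n % 4 = 1) :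
    ¬ ∃ f : Polynomial ℤ, f.Monic ∧ f.natDegree = 2 ∧ f ∣ qq n ∧
      f.map (Int.castRingHom (ZMod 3)) = X ^ 2 :=
  q_no_quadratic_factor_w_sq_mod_three_general n hneg h3 h4
end
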